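/- Let M be a reduced, bounded below, Q_0-local A(1)-module such that M^{k−1} is isomorphic to a flock of seagulls, and let b_1, …, b_ℓ ∈ M_k satisfy Sq^1 b_i = 0 for all i, with the images of b_1, …, b_ℓ in M_k/(M^{k−1})_k linearly independent over F_2. Then the A(1)-submodule of M generated by M^{k−1} together with b_1, …, b_ℓ is isomorphic to M^{k−1} ⊕ (⊕_{i=1}^{ℓ} Σ^k Υ_1). -/

import Mathlib

/-- A graded module over the subalgebra `A(1)` of the mod 2 Steenrod algebra:
an internally `ℤ`-graded `𝔽₂`-vector space equipped with operations `Sq¹` (degree `1`)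
and `Sq²` (degree `2`) satisfying `Sq¹Sq¹ = 0` and `Sq²Sq² = Sq¹Sq²Sq¹`. -/
structure A1Module where
  carrier : Type
  [acg : AddCommGroup carrier]
  [mod : Module (ZMod 2) carrier]
  gr : ℤ → Submodule (ZMod 2) carrier
  indep : iSupIndep gr
  total : ⨆ k : ℤ, gr k = ⊤
  sq1 : carrier →ₗ[ZMod 2] carrier
  sq2 : carrier →ₗ[ZMod 2] carrier
  sq1_gr : ∀ k : ℤ, ∀ x ∈ gr k, sq1 x ∈ gr (k + 1)
  sq2_gr : ∀ k : ℤ, ∀ x ∈ gr k, sq2 x ∈ gr (k + 2)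
  sq1_sq1 : ∀ x, sq1 (sq1 x) = 0
  sq2_sq2 : ∀ x, sq2 (sq2 x) = sq1 (sq2 (sq1 x))

attribute [instance] A1Module.acg A1Module.mod

namespace A1Module

variable (M : A1Module)

/-- The Milnor primitive `Q₁ = Sq¹Sq² + Sq²Sq¹`. -/
def Q1 : M.carrier →ₗ[ZMod 2] M.carrier := M.sq1 ∘ₗ M.sq2 + M.sq2 ∘ₗ M.sq1

/-- `M` is bounded below: `M_k = 0` for all `k` below some bound. -/
def BoundedBelow : Prop := ∃ n : ℤ, ∀ k : ℤ, k < n → M.gr k = ⊥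

/-- `M` is of finite type: each graded piece is a finite-dimensional `𝔽₂`-vector space. -/
def FiniteType : Prop := ∀ k : ℤ, FiniteDimensional (ZMod 2) ↥(M.gr k)

/-- `M` is finite: finite type and only finitely many nonzero graded pieces. -/
def FiniteModule : Prop := M.FiniteType ∧ {k : ℤ | M.gr k ≠ ⊥}.Finite

/-- `M` is `Q₀`-local: the `Q₁`-Margolis homology vanishes in every degree,
i.e. every homogeneous `Q₁`-cycle is a `Q₁`-boundary. -/
def Q0Local : Prop :=
  ∀ k : ℤ, LinearMap.ker M.Q1 ⊓ M.gr k ≤ Submodule.map M.Q1 (M.gr (k - 3))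

/-- `p` is a (graded) `A(1)`-submodule of `M`. -/
def IsA1Sub (p : Submodule (ZMod 2) M.carrier) : Prop :=
  (∀ x ∈ p, M.sq1 x ∈ p) ∧ (∀ x ∈ p, M.sq2 x ∈ p) ∧ p = ⨆ k : ℤ, p ⊓ M.gr k

/-- `p` is a direct summand of `M` in the category of graded `A(1)`-modules. -/
def IsSummand (p : Submodule (ZMod 2) M.carrier) : Prop :=
  M.IsA1Sub p ∧ ∃ q, M.IsA1Sub q ∧ p ⊓ q = ⊥ ∧ p ⊔ q = ⊤

/-- The action of the eight monomial basis elements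
`1, Sq¹, Sq², Sq¹Sq², Sq²Sq¹, Sq¹Sq²Sq¹, Sq²Sq¹Sq², Sq¹Sq²Sq¹Sq²` of `A(1)`. -/
def w8 : Fin 8 → (M.carrier →ₗ[ZMod 2] M.carrier) :=
  ![LinearMap.id, M.sq1, M.sq2, M.sq1 ∘ₗ M.sq2, M.sq2 ∘ₗ M.sq1,
    M.sq1 ∘ₗ M.sq2 ∘ₗ M.sq1, M.sq2 ∘ₗ M.sq1 ∘ₗ M.sq2,
    M.sq1 ∘ₗ M.sq2 ∘ₗ M.sq1 ∘ₗ M.sq2]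

/-- The action of the four monomials `1, Sq², Sq¹Sq², Sq²Sq¹Sq²`, which give an `𝔽₂`-basis of
`A(1)//A(0)` applied to a generator. -/
def w4 : Fin 4 → (M.carrier →ₗ[ZMod 2] M.carrier) :=
  ![LinearMap.id, M.sq2, M.sq1 ∘ₗ M.sq2, M.sq2 ∘ₗ M.sq1 ∘ₗ M.sq2]

/-- `p` is a free `A(1)`-submodule of `M`: it has homogeneous elements `g i` such that the
elements `Sqᴿ (g i)`, for `Sqᴿ` running over the monomial basis of `A(1)`, form a basis of `p`.
This says exactly that `p ≅ ⊕ᵢ Σ^{d i} A(1)` as graded `A(1)`-modules. -/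
def IsFreeOn (p : Submodule (ZMod 2) M.carrier) : Prop :=
  ∃ (I : Type) (d : I → ℤ) (g : I → M.carrier),
    (∀ i, g i ∈ M.gr (d i)) ∧
    LinearIndependent (ZMod 2) (fun q : I × Fin 8 => M.w8 q.2 (g q.1)) ∧
    Submodule.span (ZMod 2) (Set.range fun q : I × Fin 8 => M.w8 q.2 (g q.1)) = p

/-- `M` is reduced: it has no nonzero free direct summand. -/
def Reduced : Prop := ∀ p, M.IsSummand p → M.IsFreeOn p → p = ⊥

/-- `p` is a flock of seagulls `⊕ᵢ Σ^{α i} Υ_{n i}` inside `M`: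
there are chains of elements `y i 0, y i 1, …` (of length `n i`, possibly infinite), with
`y i j` homogeneous of degree `α i + 4j`, linked by `Sq¹ y_{i,j+1} = Sq²Sq¹Sq² y_{i,j}` and with
`Sq¹ y_{i,0} = 0`, such that the elements `Sqᴿ y_{i,j}`, for `Sqᴿ ∈ {1, Sq², Sq¹Sq², Sq²Sq¹Sq²}`,
form an `𝔽₂`-basis of `p`.  This says exactly that `p ≅ ⊕ᵢ Σ^{α i} Υ_{n i}`
as graded `A(1)`-modules. -/
def FlockBasisOn (p : Submodule (ZMod 2) M.carrier) (I : Type) (α : I → ℤ) (n : I → ℕ∞) :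
    Prop :=
  ∃ y : I → ℕ → M.carrier,
    (∀ (i : I) (j : ℕ), (j : ℕ∞) < n i → y i j ∈ M.gr (α i + 4 * (j : ℤ))) ∧
    (∀ i : I, M.sq1 (y i 0) = 0) ∧
    (∀ (i : I) (j : ℕ), ((j + 1 : ℕ) : ℕ∞) < n i →
      M.sq1 (y i (j + 1)) = M.sq2 (M.sq1 (M.sq2 (y i j)))) ∧
    LinearIndependent (ZMod 2)
      (fun q : {x : I × ℕ // (x.2 : ℕ∞) < n x.1} × Fin 4 => M.w4 q.2 (y q.1.1.1 q.1.1.2)) ∧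
    Submodule.span (ZMod 2)
      (Set.range fun q : {x : I × ℕ // (x.2 : ℕ∞) < n x.1} × Fin 4 =>
        M.w4 q.2 (y q.1.1.1 q.1.1.2)) = p

/-- `M` is (isomorphic to) a flock of seagulls `⊕ᵢ Σ^{α i} Υ_{n i}`. -/
def IsFlock : Prop :=
  ∃ (I : Type) (α : I → ℤ) (n : I → ℕ∞), (∀ i, 1 ≤ n i) ∧ M.FlockBasisOn ⊤ I α n

/-- `M^k`: the smallest `A(1)`-submodule of `M` containing all homogeneous elements of
degree at most `k`. -/
def below (k : ℤ) : Submodule (ZMod 2) M.carrier :=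
  sInf {p | (∀ x ∈ p, M.sq1 x ∈ p) ∧ (∀ x ∈ p, M.sq2 x ∈ p) ∧ ∀ j ≤ k, M.gr j ≤ p}

/-- The `A(1)`-submodule of `M` generated by a set. -/
def a1span (s : Set M.carrier) : Submodule (ZMod 2) M.carrier :=
  sInf {p | (∀ x ∈ p, M.sq1 x ∈ p) ∧ (∀ x ∈ p, M.sq2 x ∈ p) ∧ s ⊆ p}

/-- `p` is a finite submodule: each graded piece is finite-dimensional and all but finitely
many graded pieces vanish. -/
def FiniteOn (p : Submodule (ZMod 2) M.carrier) : Prop :=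
  (∀ k : ℤ, FiniteDimensional (ZMod 2) ↥(p ⊓ M.gr k)) ∧ {k : ℤ | p ⊓ M.gr k ≠ ⊥}.Finite

end A1Module

/-- Isomorphism of graded `A(1)`-modules. -/
def A1Iso (M N : A1Module) : Prop :=
  ∃ e : M.carrier ≃ₗ[ZMod 2] N.carrier,
    (∀ x, e (M.sq1 x) = N.sq1 (e x)) ∧
    (∀ x, e (M.sq2 x) = N.sq2 (e x)) ∧
    ∀ k : ℤ, ∀ x ∈ M.gr k, e x ∈ N.gr k


namespace A1Module
set_option linter.dupNamespace false

variable {M : A1Module}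

lemma add_self_eq_zero (x : M.carrier) : x + x = 0 := by
  have h : (2 : ZMod 2) = 0 := rfl
  calc x + x = (2 : ZMod 2) • x := (two_smul _ x).symm
    _ = 0 := by rw [h, zero_smul]

lemma mem_gr_cast {d e : ℤ} (h : d = e) {x : M.carrier} (hx : x ∈ M.gr d) : x ∈ M.gr e :=
  h ▸ hx

@[simp] lemma Q1_apply (x : M.carrier) :
    M.Q1 x = M.sq1 (M.sq2 x) + M.sq2 (M.sq1 x) := rfl

@[simp] lemma w4_zero (x : M.carrier) : M.w4 0 x = x := rfl
@[simp] lemma w4_one (x : M.carrier) : M.w4 1 x = M.sq2 x := rfl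
@[simp] lemma w4_two (x : M.carrier) : M.w4 2 x = M.sq1 (M.sq2 x) := rfl
@[simp] lemma w4_three (x : M.carrier) : M.w4 3 x = M.sq2 (M.sq1 (M.sq2 x)) := rfl

/-- `Sq²Sq²Sq¹ = 0`. -/
lemma G2 (x : M.carrier) : M.sq2 (M.sq2 (M.sq1 x)) = 0 := by
  rw [M.sq2_sq2, M.sq1_sq1, map_zero, map_zero]

/-- `Q₁ x = Sq¹Sq² x` when `Sq²Sq¹ x = 0`. -/
lemma TQ0 {x : M.carrier} (h1 : M.sq2 (M.sq1 x) = 0) : M.Q1 x = M.sq1 (M.sq2 x) := by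
  rw [Q1_apply, h1, add_zero]

/-- `Sq¹Sq²Sq¹Sq² x = 0` when `Sq²Sq² x = 0`. -/
lemma L6 {x : M.carrier} (h2 : M.sq2 (M.sq2 x) = 0) :
    M.sq1 (M.sq2 (M.sq1 (M.sq2 x))) = 0 := by
  rw [← M.sq2_sq2, h2, map_zero]

/-- `Q₁ Sq² x = Sq²Sq¹Sq² x` always. -/
lemma G3 (x : M.carrier) : M.Q1 (M.sq2 x) = M.sq2 (M.sq1 (M.sq2 x)) := by
  rw [Q1_apply, M.sq2_sq2 x, M.sq1_sq1, zero_add]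

/-- `Q₁ (Sq¹Sq² x) = 0` when `Sq²Sq² x = 0`. -/
lemma TQ2 {x : M.carrier} (h2 : M.sq2 (M.sq2 x) = 0) : M.Q1 (M.sq1 (M.sq2 x)) = 0 := by
  rw [Q1_apply, M.sq1_sq1, map_zero, add_zero, L6 h2]

/-- `Q₁ (Sq²Sq¹Sq² x) = 0` always. -/
lemma G4 (x : M.carrier) : M.Q1 (M.sq2 (M.sq1 (M.sq2 x))) = 0 := by
  rw [Q1_apply, G2, map_zero, zero_add, ← M.sq2_sq2, M.sq2_sq2 x, G2]

lemma Q1_gr {d : ℤ} {x : M.carrier} (hx : x ∈ M.gr d) : M.Q1 x ∈ M.gr (d + 3) := by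
  rw [Q1_apply]
  exact add_mem (mem_gr_cast (by ring) (M.sq1_gr _ _ (M.sq2_gr _ _ hx)))
    (mem_gr_cast (by ring) (M.sq2_gr _ _ (M.sq1_gr _ _ hx)))

lemma below_sq1 {c : ℤ} {x : M.carrier} (hx : x ∈ M.below c) : M.sq1 x ∈ M.below c := by
  rw [below, Submodule.mem_sInf] at hx ⊢
  exact fun p hp => hp.1 x (hx p hp)

lemma below_sq2 {c : ℤ} {x : M.carrier} (hx : x ∈ M.below c) : M.sq2 x ∈ M.below c := by
  rw [below, Submodule.mem_sInf] at hx ⊢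
  exact fun p hp => hp.2.1 x (hx p hp)

lemma gr_le_below {c j : ℤ} (h : j ≤ c) : M.gr j ≤ M.below c := by
  intro x hx
  rw [below, Submodule.mem_sInf]
  exact fun p hp => hp.2.2 j h hx

lemma below_Q1 {c : ℤ} {x : M.carrier} (hx : x ∈ M.below c) : M.Q1 x ∈ M.below c := by
  rw [Q1_apply]
  exact add_mem (below_sq1 (below_sq2 hx)) (below_sq2 (below_sq1 hx))

/-- The grading is an internal direct sum decomposition. -/
lemma isInternal (M : A1Module) : DirectSum.IsInternal M.gr :=
  (DirectSum.isInternal_submodule_iff_iSupIndep_and_iSup_eq_top M.gr).mpr ⟨M.indep, M.total⟩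

/-- Projection onto the degree-`d` component. -/
noncomputable def proj (M : A1Module) (d : ℤ) : M.carrier →ₗ[ZMod 2] M.carrier :=
  (M.gr d).subtype ∘ₗ (DirectSum.component (ZMod 2) ℤ (fun i => M.gr i) d) ∘ₗ
    (LinearEquiv.ofBijective (DirectSum.coeLinearMap M.gr) M.isInternal).symm.toLinearMap

lemma proj_same {d : ℤ} {x : M.carrier} (hx : x ∈ M.gr d) : M.proj d x = x := by
  have h := DirectSum.IsInternal.ofBijective_coeLinearMap_same M.isInternal (i := d) ⟨x, hx⟩
  simpa [proj, ← DirectSum.apply_eq_component] using congrArg Subtype.val h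

lemma proj_ne {d e : ℤ} {x : M.carrier} (hx : x ∈ M.gr e) (hne : e ≠ d) :
    M.proj d x = 0 := by
  have h := DirectSum.IsInternal.ofBijective_coeLinearMap_of_ne M.isInternal hne ⟨x, hx⟩
  simpa [proj, ← DirectSum.apply_eq_component] using congrArg Subtype.val h

lemma proj_mem (d : ℤ) (x : M.carrier) : M.proj d x ∈ M.gr d := by
  simp only [proj, LinearMap.coe_comp, Function.comp_apply, Submodule.coe_subtype]
  exact SetLike.coe_mem _

lemma proj_Q1 (d : ℤ) (x : M.carrier) : M.Q1 (M.proj d x) = M.proj (d + 3) (M.Q1 x) := by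
  have key : (⊤ : Submodule (ZMod 2) M.carrier) ≤
      LinearMap.eqLocus (M.Q1 ∘ₗ M.proj d) (M.proj (d + 3) ∘ₗ M.Q1) := by
    rw [← M.total]
    refine iSup_le fun e z hz => ?_
    show M.Q1 (M.proj d z) = M.proj (d + 3) (M.Q1 z)
    by_cases hde : e = d
    · subst hde
      rw [proj_same hz, proj_same (Q1_gr hz)]
    · rw [proj_ne hz hde, map_zero, proj_ne (Q1_gr hz) (by omega)]
  exact key (Submodule.mem_top : x ∈ ⊤)

end A1Module

namespace A1Module

variable {M : A1Module}

/-- Exactness of `Q₁` on a submodule with a "seagull-type" basis. -/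
lemma flock_exact {N : Submodule (ZMod 2) M.carrier} {Qt : Type}
    (F : Qt × Fin 4 → M.carrier)
    (hhom : ∀ p : Qt × Fin 4, ∃ e, F p ∈ M.gr e)
    (hQ10 : ∀ q : Qt, M.Q1 (F (q, 0)) = F (q, 2))
    (hQ11 : ∀ q : Qt, M.Q1 (F (q, 1)) = F (q, 3))
    (hQ12 : ∀ q : Qt, M.Q1 (F (q, 2)) = 0)
    (hQ13 : ∀ q : Qt, M.Q1 (F (q, 3)) = 0)
    (hFind : LinearIndependent (ZMod 2) F)
    (hFspan : Submodule.span (ZMod 2) (Set.range F) = N)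
    (m : ℤ) {x : M.carrier} (hxN : x ∈ N) (hxg : x ∈ M.gr m) (hxQ : M.Q1 x = 0) :
    ∃ v, v ∈ N ∧ v ∈ M.gr (m - 3) ∧ M.Q1 v = x := by
  classical
  -- the coefficient data
  set ε : Fin 4 → ZMod 2 := ![1, 1, 0, 0] with hε
  set σ : Qt × Fin 4 → Qt × Fin 4 := fun p => (p.1, p.2 + 2) with hσ
  set g : Qt × Fin 4 → ((Qt × Fin 4) →₀ ZMod 2) :=
    fun p => Finsupp.single (σ p) (ε p.2) with hg
  have hQ1F : ∀ p : Qt × Fin 4, M.Q1 (F p) = Finsupp.linearCombination (ZMod 2) F (g p) := by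
    rintro ⟨q, mm⟩
    fin_cases mm <;>
      simp only [hg, hσ, hε, Finsupp.linearCombination_single] <;> norm_num
    · exact hQ10 q
    · exact hQ11 q
    · exact hQ12 q
    · exact hQ13 q
  have hQLC : ∀ c : (Qt × Fin 4) →₀ ZMod 2,
      M.Q1 (Finsupp.linearCombination (ZMod 2) F c)
        = Finsupp.linearCombination (ZMod 2) F (c.sum fun p a => a • g p) := by
    intro c
    rw [Finsupp.linearCombination_apply, map_finsuppSum, map_finsuppSum]
    refine Finsupp.sum_congr fun p _ => ?_
    rw [map_smul, map_smul, hQ1F]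
  -- coefficients of x
  have hx' : x ∈ Submodule.span (ZMod 2) (Set.range F) := by rw [hFspan]; exact hxN
  set c : (Qt × Fin 4) →₀ ZMod 2 := hFind.repr ⟨x, hx'⟩ with hcdef
  have hc : Finsupp.linearCombination (ZMod 2) F c = x := hFind.linearCombination_repr ⟨x, hx'⟩
  have h2 : (c.sum fun p a => a • g p) = 0 := by
    apply linearIndependent_iff.mp hFind
    rw [← hQLC, hc, hxQ]
  -- evaluation of such sums
  have heval : ∀ (c' : (Qt × Fin 4) →₀ ZMod 2) (t : Qt × Fin 4),
      (c'.sum fun p a => a • g p) t = c' (σ t) * ε (t.2 + 2) := by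
    intro c' t
    rw [Finsupp.sum_apply]
    rw [Finsupp.sum]
    rw [Finset.sum_eq_single (σ t)]
    · simp only [hg, Finsupp.smul_apply, Finsupp.single_apply]
      have hst : σ (σ t) = t := by
        rcases t with ⟨tq, tm⟩
        simp only [hσ]
        have : tm + 2 + 2 = tm := by fin_cases tm <;> decide
        rw [this]
      have hεσ : ε (σ t).2 = ε (t.2 + 2) := rfl
      rw [if_pos hst, smul_eq_mul, hεσ]
    · intro p _ hp
      simp only [hg, Finsupp.smul_apply, Finsupp.single_apply]
      have : ¬ σ p = t := by
        intro hcon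
        apply hp
        rcases p with ⟨pq, pm⟩; rcases t with ⟨tq, tm⟩
        simp only [hσ, Prod.mk.injEq] at hcon ⊢
        refine ⟨hcon.1, ?_⟩
        have h4 : ∀ a b : Fin 4, a + 2 = b → a = b + 2 := by decide
        rw [h4 _ _ hcon.2]
      rw [if_neg this, smul_zero]
    · intro hns
      rw [Finsupp.notMem_support_iff.mp hns, zero_smul, Finsupp.coe_zero, Pi.zero_apply]
  -- vanishing of the coefficients of types 0 and 1
  have hc0 : ∀ q : Qt, c (q, 0) = 0 := by
    intro q
    have := congrArg (fun f => f (q, (2 : Fin 4))) h2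
    simp only [heval, Finsupp.coe_zero, Pi.zero_apply] at this
    have he2 : ε ((2 : Fin 4) + 2) = 1 := rfl
    have hs2 : σ (q, (2 : Fin 4)) = (q, 0) := by simp only [hσ]; norm_num; decide
    rw [hs2, he2, mul_one] at this
    exact this
  have hc1 : ∀ q : Qt, c (q, 1) = 0 := by
    intro q
    have := congrArg (fun f => f (q, (3 : Fin 4))) h2
    simp only [heval, Finsupp.coe_zero, Pi.zero_apply] at this
    have he2 : ε ((3 : Fin 4) + 2) = 1 := rfl
    have hs2 : σ (q, (3 : Fin 4)) = (q, 1) := by simp only [hσ]; norm_num; decide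
    rw [hs2, he2, mul_one] at this
    exact this
  -- the preimage
  set e' : Qt × Fin 4 ≃ Qt × Fin 4 :=
    Equiv.prodCongr (Equiv.refl Qt) (Equiv.addRight (2 : Fin 4)) with he'
  set d : (Qt × Fin 4) →₀ ZMod 2 := Finsupp.equivMapDomain e' c with hd
  set v0 : M.carrier := Finsupp.linearCombination (ZMod 2) F d with hv0
  have hdapp : ∀ t : Qt × Fin 4, d t = c (σ t) := by
    intro t
    rw [hd, Finsupp.equivMapDomain_apply]
    have hsymm : e'.symm t = σ t := by
      apply e'.injective
      rw [Equiv.apply_symm_apply]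
      rcases t with ⟨tq, tm⟩
      show (tq, tm) = (tq, tm + 2 + 2)
      have h4 : tm + 2 + 2 = tm := by fin_cases tm <;> decide
      rw [h4]
    rw [hsymm]
  have hQv0 : M.Q1 v0 = x := by
    rw [hv0, hQLC, ← hc]
    congr 1
    ext t
    rw [heval, hdapp]
    have hσσ : σ (σ t) = t := by
      rcases t with ⟨tq, tm⟩
      simp only [hσ]
      have : tm + 2 + 2 = tm := by fin_cases tm <;> decide
      rw [this]
    rw [hσσ]
    rcases t with ⟨tq, tm⟩
    fin_cases tm
    · show c (tq, 0) * ε ((0 : Fin 4) + 2) = c (tq, 0)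
      rw [hc0]; ring
    · show c (tq, 1) * ε ((1 : Fin 4) + 2) = c (tq, 1)
      rw [hc1]; ring
    · show c (tq, 2) * ε ((2 : Fin 4) + 2) = c (tq, 2)
      have : ε ((2 : Fin 4) + 2) = 1 := rfl
      rw [this, mul_one]
    · show c (tq, 3) * ε ((3 : Fin 4) + 2) = c (tq, 3)
      have : ε ((3 : Fin 4) + 2) = 1 := rfl
      rw [this, mul_one]
  have hv0N : v0 ∈ N := by
    have : v0 ∈ LinearMap.range (Finsupp.linearCombination (ZMod 2) F) := ⟨d, rfl⟩
    rwa [Finsupp.range_linearCombination, hFspan] at this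
  -- N is spanned by homogeneous elements, so projections stay in N
  have hNproj : ∀ (dd : ℤ), ∀ z ∈ N, M.proj dd z ∈ N := by
    intro dd z hz
    rw [← hFspan] at hz ⊢
    induction hz using Submodule.span_induction with
    | mem w hw =>
      obtain ⟨p, rfl⟩ := hw
      obtain ⟨e, he⟩ := hhom p
      by_cases hde : e = dd
      · subst hde; rw [proj_same he]; exact Submodule.subset_span ⟨p, rfl⟩
      · rw [proj_ne he hde]; exact Submodule.zero_mem _
    | zero => rw [map_zero]; exact Submodule.zero_mem _
    | add a b _ _ ha hb => rw [map_add]; exact Submodule.add_mem _ ha hb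
    | smul r a _ ha => rw [map_smul]; exact Submodule.smul_mem _ _ ha
  refine ⟨M.proj (m - 3) v0, hNproj _ _ hv0N, proj_mem _ _, ?_⟩
  rw [proj_Q1, hQv0]
  have : m - 3 + 3 = m := by ring
  rw [this, proj_same hxg]

end A1Module

namespace A1Module

variable {M : A1Module}

/-- The key step: if `z` is a homogeneous `Sq¹`-cycle of degree `k` with `Sq²Sq¹Sq² z ∈ N`,
where `N = M^{k-1}` behaves like a flock (exact `Q₁`), then `z ∈ N`. -/
lemma key_step (hloc : M.Q0Local) (k : ℤ) {N : Submodule (ZMod 2) M.carrier}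
    (hN1 : ∀ x ∈ N, M.sq1 x ∈ N) (hN2 : ∀ x ∈ N, M.sq2 x ∈ N)
    (hNgr : ∀ j ≤ k - 1, M.gr j ≤ N)
    (hexact : ∀ m : ℤ, ∀ x ∈ N, x ∈ M.gr m → M.Q1 x = 0 →
      ∃ v, v ∈ N ∧ v ∈ M.gr (m - 3) ∧ M.Q1 v = x)
    {z : M.carrier} (hzg : z ∈ M.gr k) (hz1 : M.sq1 z = 0)
    (hz5 : M.sq2 (M.sq1 (M.sq2 z)) ∈ N) : z ∈ N := by
  have hNQ1 : ∀ x ∈ N, M.Q1 x ∈ N := fun x hx => by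
    rw [Q1_apply]; exact add_mem (hN1 _ (hN2 _ hx)) (hN2 _ (hN1 _ hx))
  have htame1 : M.sq2 (M.sq1 z) = 0 := by rw [hz1, map_zero]
  have htame2 : M.sq2 (M.sq2 z) = 0 := by rw [M.sq2_sq2, hz1, map_zero, map_zero]
  set u : M.carrier := M.sq2 (M.sq1 (M.sq2 z)) with hu
  have hug : u ∈ M.gr (k + 5) :=
    mem_gr_cast (by ring) (M.sq2_gr _ _ (M.sq1_gr _ _ (M.sq2_gr _ _ hzg)))
  have huQ : M.Q1 u = 0 := G4 z
  obtain ⟨v, hvN, hvg, hvQ⟩ := hexact (k + 5) u hz5 hug huQ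
  have hvg' : v ∈ M.gr (k + 2) := mem_gr_cast (by ring) hvg
  have hwq : M.Q1 (M.sq2 z + v) = 0 := by
    rw [map_add, G3, hvQ, ← hu, add_self_eq_zero]
  have hwg : M.sq2 z + v ∈ M.gr (k + 2) := add_mem (M.sq2_gr _ _ hzg) hvg'
  obtain ⟨w2, hw2g, hw2Q⟩ := hloc (k + 2) (Submodule.mem_inf.mpr ⟨LinearMap.mem_ker.mpr hwq, hwg⟩)
  have hw2N : w2 ∈ N := hNgr (k + 2 - 3) (by omega) hw2g
  have hwN : M.sq2 z + v ∈ N := hw2Q ▸ hNQ1 _ hw2N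
  have hs2zN : M.sq2 z ∈ N := by
    have : M.sq2 z = (M.sq2 z + v) + v := by rw [add_assoc, add_self_eq_zero, add_zero]
    rw [this]; exact add_mem hwN hvN
  -- second round
  have htN : M.sq1 (M.sq2 z) ∈ N := hN1 _ hs2zN
  have htg : M.sq1 (M.sq2 z) ∈ M.gr (k + 3) :=
    mem_gr_cast (by ring) (M.sq1_gr _ _ (M.sq2_gr _ _ hzg))
  have htQ : M.Q1 (M.sq1 (M.sq2 z)) = 0 := TQ2 htame2
  obtain ⟨v', hv'N, hv'g, hv'Q⟩ := hexact (k + 3) _ htN htg htQ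
  have hv'g' : v' ∈ M.gr k := mem_gr_cast (by ring) hv'g
  have hzq : M.Q1 (z + v') = 0 := by
    rw [map_add, TQ0 htame1, hv'Q, add_self_eq_zero]
  have hzg2 : z + v' ∈ M.gr k := add_mem hzg hv'g'
  obtain ⟨w', hw'g, hw'Q⟩ := hloc k (Submodule.mem_inf.mpr ⟨LinearMap.mem_ker.mpr hzq, hzg2⟩)
  have hw'N : w' ∈ N := hNgr (k - 3) (by omega) hw'g
  have hzvN : z + v' ∈ N := hw'Q ▸ hNQ1 _ hw'N
  have : z = (z + v') + v' := by rw [add_assoc, add_self_eq_zero, add_zero]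
  rw [this]; exact add_mem hzvN hv'N

end A1Module

/-- Lemma 3.13: let `M` be a reduced, bounded below, `Q₀`-local `A(1)`-module with `M^{k-1}`
isomorphic to a flock of seagulls, and let `b₁, …, b_ℓ ∈ M_k` satisfy `Sq¹ bᵢ = 0`, with images
linearly independent in `M_k/(M^{k-1})_k`.  Then the `A(1)`-submodule generated by `M^{k-1}`
and the `bᵢ` is isomorphic to `M^{k-1} ⊕ (⊕ᵢ Σ^k Υ₁)`: it decomposes internally as the direct
sum of `M^{k-1}` and a flock of `ℓ` one-seagulls generated in degree `k`. -/
theorem lem_plus_one_seagulls (M : A1Module) (hred : M.Reduced) (hbdd : M.BoundedBelow)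
    (hloc : M.Q0Local) (k : ℤ)
    (hfl : ∃ (I : Type) (α : I → ℤ) (n : I → ℕ∞),
      (∀ i, 1 ≤ n i) ∧ M.FlockBasisOn (M.below (k - 1)) I α n)
    (l : ℕ) (b : Fin l → M.carrier)
    (hbk : ∀ i, b i ∈ M.gr k)
    (hbs : ∀ i, M.sq1 (b i) = 0)
    (hind : LinearIndependent (ZMod 2)
      (fun i : Fin l => Submodule.Quotient.mk (p := M.below (k - 1) ⊓ M.gr k) (b i))) :
    ∃ c : Fin l → M.carrier,
      (∀ i, c i ∈ M.gr k) ∧ (∀ i, M.sq1 (c i) = 0) ∧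
      LinearIndependent (ZMod 2) (fun q : Fin l × Fin 4 => M.w4 q.2 (c q.1)) ∧
      Disjoint (M.below (k - 1))
        (Submodule.span (ZMod 2) (Set.range fun q : Fin l × Fin 4 => M.w4 q.2 (c q.1))) ∧
      M.below (k - 1) ⊔
          Submodule.span (ZMod 2) (Set.range fun q : Fin l × Fin 4 => M.w4 q.2 (c q.1)) =
        M.a1span (↑(M.below (k - 1)) ∪ Set.range b) := by
  classical
  obtain ⟨I, α, n, hn1, y, hygr, hy0, hychain, hyind, hyspan⟩ := hfl
  set N := M.below (k - 1) with hN
  have hN1 : ∀ x ∈ N, M.sq1 x ∈ N := fun x hx => A1Module.below_sq1 hx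
  have hN2 : ∀ x ∈ N, M.sq2 x ∈ N := fun x hx => A1Module.below_sq2 hx
  have hNgr : ∀ j : ℤ, j ≤ k - 1 → M.gr j ≤ N := fun j hj => A1Module.gr_le_below hj
  -- tameness of the flock generators
  have htame : ∀ q : {x : I × ℕ // (x.2 : ℕ∞) < n x.1},
      M.sq2 (M.sq1 (y q.1.1 q.1.2)) = 0 ∧ M.sq2 (M.sq2 (y q.1.1 q.1.2)) = 0 := by
    rintro ⟨⟨i, j⟩, hj⟩
    cases j with
    | zero =>
      refine ⟨?_, ?_⟩
      · rw [hy0, map_zero]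
      · rw [M.sq2_sq2, hy0, map_zero, map_zero]
    | succ j' =>
      have hch : M.sq1 (y i (j' + 1)) = M.sq2 (M.sq1 (M.sq2 (y i j'))) := hychain i j' hj
      refine ⟨?_, ?_⟩
      · rw [hch]; exact A1Module.G2 _
      · rw [M.sq2_sq2, hch, A1Module.G2, map_zero]
  have hhom : ∀ p : {x : I × ℕ // (x.2 : ℕ∞) < n x.1} × Fin 4,
      ∃ e, M.w4 p.2 (y p.1.1.1 p.1.1.2) ∈ M.gr e := by
    rintro ⟨⟨⟨i, j⟩, hj⟩, mm⟩
    have hy : y i j ∈ M.gr (α i + 4 * (j : ℤ)) := hygr i j hj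
    fin_cases mm
    · exact ⟨_, hy⟩
    · exact ⟨_, M.sq2_gr _ _ hy⟩
    · exact ⟨_, M.sq1_gr _ _ (M.sq2_gr _ _ hy)⟩
    · exact ⟨_, M.sq2_gr _ _ (M.sq1_gr _ _ (M.sq2_gr _ _ hy))⟩
  -- Q₁-exactness of N
  have hexact : ∀ m : ℤ, ∀ x ∈ N, x ∈ M.gr m → M.Q1 x = 0 →
      ∃ v, v ∈ N ∧ v ∈ M.gr (m - 3) ∧ M.Q1 v = x := by
    intro m x hxN hxg hxQ
    refine A1Module.flock_exact
      (fun q : {x : I × ℕ // (x.2 : ℕ∞) < n x.1} × Fin 4 => M.w4 q.2 (y q.1.1.1 q.1.1.2))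
      hhom ?_ ?_ ?_ ?_ hyind hyspan m hxN hxg hxQ
    · intro q; exact A1Module.TQ0 (htame q).1
    · intro q; exact A1Module.G3 _
    · intro q; exact A1Module.TQ2 (htame q).2
    · intro q; exact A1Module.G4 _
  have hkey : ∀ z, z ∈ M.gr k → M.sq1 z = 0 → M.sq2 (M.sq1 (M.sq2 z)) ∈ N → z ∈ N :=
    fun z hzg hz1 hz5 => A1Module.key_step hloc k hN1 hN2 hNgr hexact hzg hz1 hz5
  -- N is graded
  have hNproj : ∀ d : ℤ, ∀ x ∈ N, M.proj d x ∈ N := by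
    intro d x hx
    rw [← hyspan] at hx ⊢
    induction hx using Submodule.span_induction with
    | mem w hw =>
      obtain ⟨p, rfl⟩ := hw
      obtain ⟨e, he⟩ := hhom p
      by_cases hde : e = d
      · subst hde; rw [A1Module.proj_same he]; exact Submodule.subset_span ⟨p, rfl⟩
      · rw [A1Module.proj_ne he hde]; exact Submodule.zero_mem _
    | zero => rw [map_zero]; exact Submodule.zero_mem _
    | add a c _ _ ha hc => rw [map_add]; exact Submodule.add_mem _ ha hc
    | smul r a _ ha => rw [map_smul]; exact Submodule.smul_mem _ _ ha
  -- the workhorse: any ZMod-2 combination of the `w4 (b i)` lying in N is trivial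
  have hwork : ∀ μ : Fin l × Fin 4 → ZMod 2,
      (∑ q : Fin l × Fin 4, μ q • M.w4 q.2 (b q.1)) ∈ N → ∀ q, μ q = 0 := by
    intro μ hμ
    have hzg : ∀ mm : Fin 4, (∑ i, μ (i, mm) • b i) ∈ M.gr k :=
      fun mm => Submodule.sum_mem _ fun i _ => Submodule.smul_mem _ _ (hbk i)
    have hz1 : ∀ mm : Fin 4, M.sq1 (∑ i, μ (i, mm) • b i) = 0 := by
      intro mm
      rw [map_sum]
      simp only [map_smul, hbs, smul_zero]
      exact Finset.sum_const_zero
    have hsum : (∑ q : Fin l × Fin 4, μ q • M.w4 q.2 (b q.1))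
        = (∑ i, μ (i, 0) • b i) + M.sq2 (∑ i, μ (i, 1) • b i)
          + M.sq1 (M.sq2 (∑ i, μ (i, 2) • b i))
          + M.sq2 (M.sq1 (M.sq2 (∑ i, μ (i, 3) • b i))) := by
      rw [Fintype.sum_prod_type_right, Fin.sum_univ_four]
      simp only [A1Module.w4_zero, A1Module.w4_one, A1Module.w4_two, A1Module.w4_three,
        map_sum, map_smul]
    rw [hsum] at hμ
    have hg0 : (∑ i, μ (i, 0) • b i) ∈ M.gr k := hzg 0
    have hg1 : M.sq2 (∑ i, μ (i, 1) • b i) ∈ M.gr (k + 2) := M.sq2_gr _ _ (hzg 1)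
    have hg2 : M.sq1 (M.sq2 (∑ i, μ (i, 2) • b i)) ∈ M.gr (k + 2 + 1) :=
      M.sq1_gr _ _ (M.sq2_gr _ _ (hzg 2))
    have hg3 : M.sq2 (M.sq1 (M.sq2 (∑ i, μ (i, 3) • b i))) ∈ M.gr (k + 2 + 1 + 2) :=
      M.sq2_gr _ _ (M.sq1_gr _ _ (M.sq2_gr _ _ (hzg 3)))
    have hextract : ∀ mm : Fin 4, (∑ i, μ (i, mm) • b i) ∈ N → ∀ i, μ (i, mm) = 0 := by
      intro mm hmN i
      have hmem : (∑ i, μ (i, mm) • b i) ∈ M.below (k - 1) ⊓ M.gr k :=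
        Submodule.mem_inf.mpr ⟨hmN, hzg mm⟩
      have hq : (∑ j, μ (j, mm) • Submodule.Quotient.mk (p := M.below (k - 1) ⊓ M.gr k) (b j))
          = 0 := by
        have hmk : (∑ j, μ (j, mm) • Submodule.Quotient.mk (p := M.below (k - 1) ⊓ M.gr k) (b j))
            = Submodule.Quotient.mk (p := M.below (k - 1) ⊓ M.gr k) (∑ i, μ (i, mm) • b i) := by
          simp only [← Submodule.mkQ_apply, ← map_smul, ← map_sum]
        rw [hmk, Submodule.Quotient.mk_eq_zero]
        exact hmem
      exact Fintype.linearIndependent_iff.mp hind (fun j => μ (j, mm)) hq i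
    have hp0 : M.proj k ((∑ i, μ (i, 0) • b i) + M.sq2 (∑ i, μ (i, 1) • b i)
          + M.sq1 (M.sq2 (∑ i, μ (i, 2) • b i))
          + M.sq2 (M.sq1 (M.sq2 (∑ i, μ (i, 3) • b i))))
        = (∑ i, μ (i, 0) • b i) := by
      rw [map_add, map_add, map_add, A1Module.proj_same hg0, A1Module.proj_ne hg1 (by omega),
        A1Module.proj_ne hg2 (by omega), A1Module.proj_ne hg3 (by omega), add_zero, add_zero,
        add_zero]
    have hp1 : M.proj (k + 2) ((∑ i, μ (i, 0) • b i) + M.sq2 (∑ i, μ (i, 1) • b i)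
          + M.sq1 (M.sq2 (∑ i, μ (i, 2) • b i))
          + M.sq2 (M.sq1 (M.sq2 (∑ i, μ (i, 3) • b i))))
        = M.sq2 (∑ i, μ (i, 1) • b i) := by
      rw [map_add, map_add, map_add, A1Module.proj_ne hg0 (by omega), A1Module.proj_same hg1,
        A1Module.proj_ne hg2 (by omega), A1Module.proj_ne hg3 (by omega), add_zero, add_zero,
        zero_add]
    have hp2 : M.proj (k + 2 + 1) ((∑ i, μ (i, 0) • b i) + M.sq2 (∑ i, μ (i, 1) • b i)
          + M.sq1 (M.sq2 (∑ i, μ (i, 2) • b i))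
          + M.sq2 (M.sq1 (M.sq2 (∑ i, μ (i, 3) • b i))))
        = M.sq1 (M.sq2 (∑ i, μ (i, 2) • b i)) := by
      rw [map_add, map_add, map_add, A1Module.proj_ne hg0 (by omega),
        A1Module.proj_ne hg1 (by omega), A1Module.proj_same hg2,
        A1Module.proj_ne hg3 (by omega), add_zero, zero_add, zero_add]
    have hp3 : M.proj (k + 2 + 1 + 2) ((∑ i, μ (i, 0) • b i) + M.sq2 (∑ i, μ (i, 1) • b i)
          + M.sq1 (M.sq2 (∑ i, μ (i, 2) • b i))
          + M.sq2 (M.sq1 (M.sq2 (∑ i, μ (i, 3) • b i))))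
        = M.sq2 (M.sq1 (M.sq2 (∑ i, μ (i, 3) • b i))) := by
      rw [map_add, map_add, map_add, A1Module.proj_ne hg0 (by omega),
        A1Module.proj_ne hg1 (by omega), A1Module.proj_ne hg2 (by omega),
        A1Module.proj_same hg3, zero_add, zero_add, zero_add]
    have hz0N : (∑ i, μ (i, 0) • b i) ∈ N := by rw [← hp0]; exact hNproj _ _ hμ
    have hz1N : (∑ i, μ (i, 1) • b i) ∈ N := by
      have hs : M.sq2 (∑ i, μ (i, 1) • b i) ∈ N := by rw [← hp1]; exact hNproj _ _ hμ
      exact hkey _ (hzg 1) (hz1 1) (hN2 _ (hN1 _ hs))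
    have hz2N : (∑ i, μ (i, 2) • b i) ∈ N := by
      have hs : M.sq1 (M.sq2 (∑ i, μ (i, 2) • b i)) ∈ N := by rw [← hp2]; exact hNproj _ _ hμ
      exact hkey _ (hzg 2) (hz1 2) (hN2 _ hs)
    have hz3N : (∑ i, μ (i, 3) • b i) ∈ N := by
      have hs : M.sq2 (M.sq1 (M.sq2 (∑ i, μ (i, 3) • b i))) ∈ N := by
        rw [← hp3]; exact hNproj _ _ hμ
      exact hkey _ (hzg 3) (hz1 3) hs
    rintro ⟨i, mm⟩
    fin_cases mm
    · exact hextract 0 hz0N i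
    · exact hextract 1 hz1N i
    · exact hextract 2 hz2N i
    · exact hextract 3 hz3N i
  -- tameness of the b i
  have htb2 : ∀ i, M.sq2 (M.sq2 (b i)) = 0 := fun i => by
    rw [M.sq2_sq2, hbs, map_zero, map_zero]
  -- assembling the answer
  refine ⟨b, hbk, hbs, ?_, ?_, ?_⟩
  · rw [Fintype.linearIndependent_iff]
    intro μ hμ0
    exact hwork μ (by rw [hμ0]; exact N.zero_mem)
  · rw [Submodule.disjoint_def]
    intro x hxN hxS
    obtain ⟨μ, hμ⟩ := (Submodule.mem_span_range_iff_exists_fun _).mp hxS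
    have h0 := hwork μ (by rw [hμ]; exact hxN)
    rw [← hμ]
    exact Finset.sum_eq_zero fun q _ => by rw [h0 q, zero_smul]
  · set sp := Submodule.span (ZMod 2) (Set.range fun q : Fin l × Fin 4 => M.w4 q.2 (b q.1))
      with hspdef
    have hsp1 : ∀ x ∈ sp, M.sq1 x ∈ sp := by
      intro x hx
      induction hx using Submodule.span_induction with
      | mem w hw =>
        obtain ⟨⟨i, mm⟩, rfl⟩ := hw
        fin_cases mm
        · show M.sq1 (M.w4 0 (b i)) ∈ sp
          rw [A1Module.w4_zero, hbs]; exact sp.zero_mem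
        · show M.sq1 (M.w4 1 (b i)) ∈ sp
          exact Submodule.subset_span ⟨(i, 2), rfl⟩
        · show M.sq1 (M.w4 2 (b i)) ∈ sp
          rw [A1Module.w4_two, M.sq1_sq1]; exact sp.zero_mem
        · show M.sq1 (M.w4 3 (b i)) ∈ sp
          rw [A1Module.w4_three, A1Module.L6 (htb2 i)]; exact sp.zero_mem
      | zero => rw [map_zero]; exact sp.zero_mem
      | add a c _ _ ha hc => rw [map_add]; exact Submodule.add_mem _ ha hc
      | smul r a _ ha => rw [map_smul]; exact Submodule.smul_mem _ _ ha
    have hsp2 : ∀ x ∈ sp, M.sq2 x ∈ sp := by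
      intro x hx
      induction hx using Submodule.span_induction with
      | mem w hw =>
        obtain ⟨⟨i, mm⟩, rfl⟩ := hw
        fin_cases mm
        · show M.sq2 (M.w4 0 (b i)) ∈ sp
          exact Submodule.subset_span ⟨(i, 1), rfl⟩
        · show M.sq2 (M.w4 1 (b i)) ∈ sp
          rw [A1Module.w4_one, htb2]; exact sp.zero_mem
        · show M.sq2 (M.w4 2 (b i)) ∈ sp
          exact Submodule.subset_span ⟨(i, 3), rfl⟩
        · show M.sq2 (M.w4 3 (b i)) ∈ sp
          rw [A1Module.w4_three, A1Module.G2]; exact sp.zero_mem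
      | zero => rw [map_zero]; exact sp.zero_mem
      | add a c _ _ ha hc => rw [map_add]; exact Submodule.add_mem _ ha hc
      | smul r a _ ha => rw [map_smul]; exact Submodule.smul_mem _ _ ha
    have hsub1 : ∀ x ∈ N ⊔ sp, M.sq1 x ∈ N ⊔ sp := by
      intro x hx
      obtain ⟨a, ha, c, hc, rfl⟩ := Submodule.mem_sup.mp hx
      rw [map_add]
      exact Submodule.add_mem _ (Submodule.mem_sup_left (hN1 _ ha))
        (Submodule.mem_sup_right (hsp1 _ hc))
    have hsub2 : ∀ x ∈ N ⊔ sp, M.sq2 x ∈ N ⊔ sp := by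
      intro x hx
      obtain ⟨a, ha, c, hc, rfl⟩ := Submodule.mem_sup.mp hx
      rw [map_add]
      exact Submodule.add_mem _ (Submodule.mem_sup_left (hN2 _ ha))
        (Submodule.mem_sup_right (hsp2 _ hc))
    apply le_antisymm
    · rw [A1Module.a1span]
      apply le_sInf
      rintro p ⟨hp1, hp2, hp3⟩
      apply sup_le
      · intro x hx
        exact hp3 (Set.mem_union_left _ hx)
      · rw [Submodule.span_le]
        rintro w ⟨⟨i, mm⟩, rfl⟩
        have hbp : b i ∈ p := hp3 (Set.mem_union_right _ ⟨i, rfl⟩)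
        fin_cases mm
        · exact hbp
        · exact hp2 _ hbp
        · exact hp1 _ (hp2 _ hbp)
        · exact hp2 _ (hp1 _ (hp2 _ hbp))
    · apply sInf_le
      refine ⟨hsub1, hsub2, Set.union_subset ?_ ?_⟩
      · intro x hx
        exact Submodule.mem_sup_left hx
      · rintro w ⟨i, rfl⟩
        exact Submodule.mem_sup_right (Submodule.subset_span ⟨(i, 0), rfl⟩)
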